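/- arXiv:2110.10303 — 5 statements merged into one kernel-verified Lean document; each statement's English description precedes it below -/
import Mathlib

section
/- Let X and Z be standard Borel spaces, P_X a probability measure on X, P_Z a probability measure on Z, g : Z → X measurable and c : X × X → [0,∞] measurable. For every Markov kernel Q from X to Z whose P_X-mixture equals P_Z (i.e. the measure A ↦ ∫ Q(x)(A) dP_X(x) equals P_Z), one has W_c(P_X, g#P_Z) ≤ ∫_X ∫_Z c(x, g(z)) dQ(x)(z) dP_X(x). -/
open MeasureTheory ProbabilityTheory ENNReal

/-- The Wasserstein (optimal transport) cost between two measures on `X` for a cost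
function `c : X × X → ℝ≥0∞`: the infimum, over all couplings `π` of `μ` and `ν`
(probability measures on `X × X` whose first and second marginals are `μ` and `ν`),
of `∫ c dπ`. -/
noncomputable def wassersteinCost {X : Type*} [MeasurableSpace X]
    (c : X × X → ℝ≥0∞) (μ ν : Measure X) : ℝ≥0∞ :=
  ⨅ (π : Measure (X × X)) (_ : IsProbabilityMeasure π)
    (_ : π.map Prod.fst = μ) (_ : π.map Prod.snd = ν), ∫⁻ p, c p ∂π

/-! The measure `P_X ⊗ₘ (Q.map g)`, i.e. the law of `(x, g z)` with `x ∼ P_X` and `z ∼ Q x`,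
couples `P_X` with `g#P_Z` because the mixture of `Q` is `P_Z`, and its expected cost is the
right-hand side by Tonelli. -/

section

variable {X : Type*} [MeasurableSpace X] {c : X × X → ℝ≥0∞}

theorem wassersteinCost_le_lintegral {μ ν : Measure X} (π : Measure (X × X))
    [IsProbabilityMeasure π] (hfst : π.fst = μ) (hsnd : π.snd = ν) :
    wassersteinCost c μ ν ≤ ∫⁻ p, c p ∂π :=
  iInf₂_le_of_le π ‹_› (iInf₂_le_of_le hfst hsnd le_rfl)

theorem wassersteinCost_comp_le_lintegral (hc : Measurable c) (μ : Measure X)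
    [IsProbabilityMeasure μ] (κ : Kernel X X) [IsMarkovKernel κ] :
    wassersteinCost c μ (κ ∘ₘ μ) ≤ ∫⁻ x, ∫⁻ y, c (x, y) ∂(κ x) ∂μ := by
  calc wassersteinCost c μ (κ ∘ₘ μ) ≤ ∫⁻ p, c p ∂(μ ⊗ₘ κ) :=
        wassersteinCost_le_lintegral _ (Measure.fst_compProd μ κ) (Measure.snd_compProd μ κ)
    _ = ∫⁻ x, ∫⁻ y, c (x, y) ∂(κ x) ∂μ := Measure.lintegral_compProd hc

end

theorem wassersteinCost_le_of_kernel_general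
    {X Z : Type*} [MeasurableSpace X]
    [MeasurableSpace Z]
    (P_X : Measure X) [IsProbabilityMeasure P_X]
    (P_Z : Measure Z)
    (g : Z → X) (hg : Measurable g)
    (c : X × X → ℝ≥0∞) (hc : Measurable c)
    (Q : Kernel X Z) [IsMarkovKernel Q]
    (hQ : P_X.bind (fun x => Q x) = P_Z) :
    wassersteinCost c P_X (P_Z.map g) ≤ ∫⁻ x, ∫⁻ z, c (x, g z) ∂(Q x) ∂P_X := by
  have hmarginal : Q.map g ∘ₘ P_X = P_Z.map g := by
    rw [← Measure.map_comp P_X Q hg, ← hQ]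
  have hcost (x : X) : ∫⁻ y, c (x, y) ∂(Q.map g x) = ∫⁻ z, c (x, g z) ∂(Q x) :=
    Q.lintegral_map hg x (hc.comp measurable_prodMk_left)
  have : IsMarkovKernel (Q.map g) := Kernel.IsMarkovKernel.map Q hg
  simpa only [hmarginal, hcost] using wassersteinCost_comp_le_lintegral hc P_X (Q.map g)

/-- For any Markov kernel `Q` from `X` to `Z` whose `P_X`-mixture is `P_Z`, the expected
reconstruction cost `∫∫ c (x, g z) dQ(x)(z) dP_X(x)` upper bounds `W_c(P_X, g#P_Z)`. -/
theorem wassersteinCost_le_of_kernel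
    {X Z : Type*} [MeasurableSpace X] [StandardBorelSpace X]
    [MeasurableSpace Z] [StandardBorelSpace Z]
    (P_X : Measure X) [IsProbabilityMeasure P_X]
    (P_Z : Measure Z) [IsProbabilityMeasure P_Z]
    (g : Z → X) (hg : Measurable g)
    (c : X × X → ℝ≥0∞) (hc : Measurable c)
    (Q : Kernel X Z) [IsMarkovKernel Q]
    (hQ : P_X.bind (fun x => Q x) = P_Z) :
    wassersteinCost c P_X (P_Z.map g) ≤ ∫⁻ x, ∫⁻ z, c (x, g z) ∂(Q x) ∂P_X :=
  wassersteinCost_le_of_kernel_general P_X P_Z g hg c hc Q hQ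
end

section
/- Let X and Z be standard Borel spaces, P_X a probability measure on X, P_Z a probability measure on Z, and g : Z → X measurable. For every coupling π of P_X and g#P_Z (a probability measure on X × X with marginals P_X and g#P_Z), there exists a coupling ρ of P_X and P_Z (a probability measure on X × Z with marginals P_X and P_Z) such that the pushforward of ρ under the map (x, z) ↦ (x, g(z)) equals π; consequently ∫ c dπ = ∫ c(x, g(z)) dρ(x, z) for every measurable c : X × X → [0,∞]. -/
/-!
Disintegrating the law of `(g z, z)` under `P_Z` along its first coordinate gives a Markov
kernel `κ : X → Z` with `κ ∘ₘ g#P_Z = P_Z` whose measures `κ x` live on the fibres `g⁻¹ {x}`.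
Drawing `(x, y)` from `π` and then `z` from `κ y` gives the lift `ρ`: its second marginal is
`κ ∘ₘ g#P_Z = P_Z`, and since `g z = y` almost surely, `(x, g z)` has law `π`.
-/

open MeasureTheory ENNReal ProbabilityTheory

namespace MeasureTheory.Measure

variable {X Y Z : Type*} [MeasurableSpace X] [MeasurableSpace Y] [MeasurableSpace Z]

theorem exists_fiberwise_disintegration [MeasurableEq X] [StandardBorelSpace Z] [Nonempty Z]
    (P : Measure Z) [IsFiniteMeasure P] {g : Z → X} (hg : Measurable g) :
    ∃ κ : Kernel X Z, IsMarkovKernel κ ∧ κ ∘ₘ P.map g = P ∧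
      ∀ᵐ x ∂P.map g, (κ x).map g = dirac x := by
  have hgraph : Measurable fun z => (g z, z) := hg.prodMk measurable_id
  set μ : Measure (X × Z) := P.map fun z => (g z, z)
  have hμ_fst : μ.fst = P.map g := by
    rw [Measure.fst, map_map measurable_fst hgraph]; rfl
  have hμ_snd : μ.snd = P := by
    rw [Measure.snd, map_map measurable_snd hgraph, Function.comp_def, map_id']
  have hμ_graph : ∀ᵐ p ∂μ, g p.2 = p.1 :=
    (ae_map_iff hgraph.aemeasurable (measurableSet_eq_fun (by fun_prop) measurable_fst)).mpr
      (.of_forall fun _ => rfl)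
  refine ⟨μ.condKernel, inferInstance, ?_, ?_⟩
  · rw [← hμ_fst, ← snd_compProd, disintegrate, hμ_snd]
  · rw [← disintegrate μ μ.condKernel] at hμ_graph
    rw [← hμ_fst]
    filter_upwards [ae_ae_of_ae_compProd hμ_graph] with x hx
    rw [map_congr hx, map_const, measure_univ, one_smul]

noncomputable def resampleSnd (π : Measure (X × Y)) (κ : Kernel Y Z) : Measure (X × Z) :=
  (π ⊗ₘ κ.prodMkLeft X).map fun q => (q.1.1, q.2)

variable {π : Measure (X × Y)} [SFinite π] {κ : Kernel Y Z}

instance [IsProbabilityMeasure π] [IsMarkovKernel κ] : IsProbabilityMeasure (π.resampleSnd κ) :=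
  isProbabilityMeasure_map (by fun_prop)

theorem fst_resampleSnd [IsMarkovKernel κ] : (π.resampleSnd κ).fst = π.fst := by
  conv_rhs => rw [← fst_compProd π (κ.prodMkLeft X)]
  rw [resampleSnd, fst_map_prodMk measurable_snd, Measure.fst, Measure.fst,
    map_map measurable_fst measurable_fst]
  rfl

theorem snd_resampleSnd [IsSFiniteKernel κ] : (π.resampleSnd κ).snd = κ ∘ₘ π.snd := by
  rw [resampleSnd, snd_map_prodMk (by fun_prop), ← Measure.snd, snd_compProd, Kernel.prodMkLeft,
    ← Kernel.comp_deterministic_eq_comap κ measurable_snd, ← comp_assoc,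
    deterministic_comp_eq_map]
  rfl

theorem map_resampleSnd [IsSFiniteKernel κ] {g : Z → Y} (hg : Measurable g)
    (hκ : ∀ᵐ y ∂π.snd, (κ y).map g = dirac y) :
    (π.resampleSnd κ).map (Prod.map id g) = π := by
  have hκπ : (κ.prodMkLeft X).map g
      =ᵐ[π] (Kernel.deterministic Prod.snd measurable_snd : Kernel (X × Y) Y) := by
    filter_upwards [ae_of_ae_map measurable_snd.aemeasurable hκ] with p hp
    rw [Kernel.map_apply _ hg, Kernel.prodMkLeft_apply, hp, Kernel.deterministic_apply]
  calc (π.resampleSnd κ).map (Prod.map id g)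
      = ((π ⊗ₘ κ.prodMkLeft X).map (Prod.map id g)).map fun q => (q.1.1, q.2) := by
        rw [resampleSnd, map_map (by fun_prop) (by fun_prop), map_map (by fun_prop) (by fun_prop)]
        rfl
    _ = (π ⊗ₘ Kernel.deterministic Prod.snd measurable_snd).map fun q => (q.1.1, q.2) := by
        rw [← compProd_map hg, compProd_congr hκπ]
    _ = π := by
        rw [compProd_deterministic, map_map (by fun_prop) (by fun_prop)]
        exact map_id

end MeasureTheory.Measure

theorem exists_coupling_lift_general
    {X Z : Type*} [MeasurableSpace X] [StandardBorelSpace X]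
    [MeasurableSpace Z] [StandardBorelSpace Z]
    (P_X : Measure X)
    (P_Z : Measure Z) [IsProbabilityMeasure P_Z]
    (g : Z → X) (hg : Measurable g)
    (π : Measure (X × X)) [IsProbabilityMeasure π]
    (hπ₁ : π.map Prod.fst = P_X) (hπ₂ : π.map Prod.snd = P_Z.map g) :
    ∃ ρ : Measure (X × Z), IsProbabilityMeasure ρ ∧
      ρ.map Prod.fst = P_X ∧ ρ.map Prod.snd = P_Z ∧
      ρ.map (fun p => (p.1, g p.2)) = π ∧
      ∀ c : X × X → ℝ≥0∞, Measurable c →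
        ∫⁻ p, c p ∂π = ∫⁻ p, c (p.1, g p.2) ∂ρ := by
  have : Nonempty Z := P_Z.nonempty_of_neZero
  obtain ⟨κ, _, hκ_comp, hκ_fiber⟩ := P_Z.exists_fiberwise_disintegration hg
  have hκ : ∀ᵐ y ∂π.snd, (κ y).map g = Measure.dirac y := by rwa [Measure.snd, hπ₂]
  have hρ_map : (π.resampleSnd κ).map (fun p => (p.1, g p.2)) = π :=
    Measure.map_resampleSnd hg hκ
  refine ⟨π.resampleSnd κ, inferInstance, ?_, ?_, hρ_map, fun c hc => ?_⟩
  · exact Measure.fst_resampleSnd.trans hπ₁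
  · rw [← Measure.snd, Measure.snd_resampleSnd, Measure.snd, hπ₂, hκ_comp]
  · conv_lhs => rw [← hρ_map]
    exact lintegral_map hc (by fun_prop)

/-- Any coupling `π` of `P_X` and `g#P_Z` lifts to a coupling `ρ` of `P_X` and `P_Z`
whose pushforward under `(x, z) ↦ (x, g z)` is `π`; consequently
`∫ c dπ = ∫ c (x, g z) dρ (x, z)` for every measurable cost `c`. -/
theorem exists_coupling_lift
    {X Z : Type*} [MeasurableSpace X] [StandardBorelSpace X]
    [MeasurableSpace Z] [StandardBorelSpace Z]
    (P_X : Measure X) [IsProbabilityMeasure P_X]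
    (P_Z : Measure Z) [IsProbabilityMeasure P_Z]
    (g : Z → X) (hg : Measurable g)
    (π : Measure (X × X)) [IsProbabilityMeasure π]
    (hπ₁ : π.map Prod.fst = P_X) (hπ₂ : π.map Prod.snd = P_Z.map g) :
    ∃ ρ : Measure (X × Z), IsProbabilityMeasure ρ ∧
      ρ.map Prod.fst = P_X ∧ ρ.map Prod.snd = P_Z ∧
      ρ.map (fun p => (p.1, g p.2)) = π ∧
      ∀ c : X × X → ℝ≥0∞, Measurable c →
        ∫⁻ p, c p ∂π = ∫⁻ p, c (p.1, g p.2) ∂ρ :=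
  exists_coupling_lift_general P_X P_Z g hg π hπ₁ hπ₂
end

section
/- (Wasserstein autoencoder theorem, coupling form.) Let X and Z be standard Borel spaces, P_X a probability measure on X, P_Z a probability measure on Z, g : Z → X measurable and c : X × X → [0,∞] measurable. Then W_c(P_X, g#P_Z) = inf over all couplings ρ of P_X and P_Z (probability measures on X × Z with marginals P_X and P_Z) of ∫ c(x, g(z)) dρ(x, z). -/
open MeasureTheory ENNReal

open ProbabilityTheory

private lemma measurableSet_eq_fun_sb {α X : Type*} [MeasurableSpace α] [MeasurableSpace X]
    [StandardBorelSpace X] {f h : α → X} (hf : Measurable f) (hh : Measurable h) :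
    MeasurableSet {x | f x = h x} := by
  letI := upgradeStandardBorel X
  exact hf.stronglyMeasurable.measurableSet_eq_fun hh.stronglyMeasurable

/-- Wasserstein autoencoder theorem, coupling form: `W_c(P_X, g#P_Z)` equals the infimum
over all couplings `ρ` of `P_X` and `P_Z` of `∫ c (x, g z) dρ (x, z)`. -/
theorem wassersteinCost_eq_iInf_coupling
    {X Z : Type*} [MeasurableSpace X] [StandardBorelSpace X]
    [MeasurableSpace Z] [StandardBorelSpace Z]
    (P_X : Measure X) [IsProbabilityMeasure P_X]
    (P_Z : Measure Z) [IsProbabilityMeasure P_Z]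
    (g : Z → X) (hg : Measurable g)
    (c : X × X → ℝ≥0∞) (hc : Measurable c) :
    wassersteinCost c P_X (P_Z.map g) =
      ⨅ (ρ : Measure (X × Z)) (_ : IsProbabilityMeasure ρ)
        (_ : ρ.map Prod.fst = P_X) (_ : ρ.map Prod.snd = P_Z),
        ∫⁻ p, c (p.1, g p.2) ∂ρ := by
  have hgs : Measurable fun z : Z => (g z, z) := hg.prodMk measurable_id
  apply le_antisymm
  · -- easy direction: push a coupling of `P_X, P_Z` forward by `(id, g)`
    refine le_iInf fun ρ => le_iInf fun hρ => le_iInf fun hρ1 => le_iInf fun hρ2 => ?_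
    have hfm : Measurable fun p : X × Z => (p.1, g p.2) :=
      measurable_fst.prodMk (hg.comp measurable_snd)
    haveI h1 : IsProbabilityMeasure (ρ.map fun p : X × Z => (p.1, g p.2)) :=
      Measure.isProbabilityMeasure_map hfm.aemeasurable
    have h2 : (ρ.map fun p : X × Z => (p.1, g p.2)).map Prod.fst = P_X := by
      rw [Measure.map_map measurable_fst hfm]; exact hρ1
    have h3 : (ρ.map fun p : X × Z => (p.1, g p.2)).map Prod.snd = P_Z.map g := by
      rw [Measure.map_map measurable_snd hfm]
      show ρ.map (g ∘ Prod.snd) = _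
      rw [← Measure.map_map hg measurable_snd, hρ2]
    calc wassersteinCost c P_X (P_Z.map g)
        ≤ ∫⁻ p, c p ∂(ρ.map fun p : X × Z => (p.1, g p.2)) :=
          iInf_le_of_le _ (iInf_le_of_le h1 (iInf_le_of_le h2 (iInf_le_of_le h3 le_rfl)))
      _ = ∫⁻ p, c (p.1, g p.2) ∂ρ := lintegral_map hc hfm
  · -- hard direction: disintegrate `P_Z` over `g`
    refine le_iInf fun π => le_iInf fun hπ => le_iInf fun hπ1 => le_iInf fun hπ2 => ?_
    haveI : Nonempty Z := by
      rcases isEmpty_or_nonempty Z with h | h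
      · exfalso
        have h1 : P_Z Set.univ = 1 := measure_univ
        rw [Set.univ_eq_empty_iff.mpr h] at h1
        simp at h1
      · exact h
    set μJ : Measure (X × Z) := P_Z.map fun z => (g z, z) with hμJ
    haveI : IsProbabilityMeasure μJ := Measure.isProbabilityMeasure_map hgs.aemeasurable
    have hfstJ : μJ.fst = P_Z.map g := Measure.fst_map_prodMk measurable_id
    set κ : Kernel X Z := μJ.condKernel with hκ
    haveI hκM : IsMarkovKernel κ := by rw [hκ]; infer_instance
    haveI hκC : μJ.IsCondKernel κ := by rw [hκ]; infer_instance
    set K : Kernel (X × X) Z := κ.comap Prod.snd measurable_snd with hK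
    haveI : IsMarkovKernel K := Kernel.IsMarkovKernel.comap κ measurable_snd
    have hqm : Measurable fun q : (X × X) × Z => (q.1.1, q.2) :=
      (measurable_fst.comp measurable_fst).prodMk measurable_snd
    set ρ : Measure (X × Z) := (π ⊗ₘ K).map (fun q : (X × X) × Z => (q.1.1, q.2)) with hρdef
    haveI : IsProbabilityMeasure ρ := Measure.isProbabilityMeasure_map hqm.aemeasurable
    have hπ2' : π.map Prod.snd = μJ.fst := by rw [hπ2, hfstJ]
    -- first marginal of ρ
    have hfstcp : (π ⊗ₘ K).map Prod.fst = π := Measure.fst_compProd π K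
    have hρ1 : ρ.map Prod.fst = P_X := by
      rw [hρdef, Measure.map_map measurable_fst hqm,
        show (Prod.fst ∘ fun q : (X × X) × Z => (q.1.1, q.2)) = Prod.fst ∘ Prod.fst from rfl,
        ← Measure.map_map measurable_fst measurable_fst, hfstcp, hπ1]
    -- second marginal of ρ
    have hρ2 : ρ.map Prod.snd = P_Z := by
      rw [hρdef, Measure.map_map measurable_snd hqm]
      show (π ⊗ₘ K).map Prod.snd = P_Z
      ext s hs
      rw [Measure.map_apply measurable_snd hs, Measure.compProd_apply (measurable_snd hs)]
      have e1 : ∫⁻ p : X × X, K p (Prod.mk p ⁻¹' (Prod.snd ⁻¹' s)) ∂π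
          = ∫⁻ p : X × X, κ p.2 s ∂π := by
        refine lintegral_congr fun p => ?_
        rw [hK, Kernel.comap_apply]
        congr 1
      have e2 : ∫⁻ p : X × X, κ p.2 s ∂π = ∫⁻ x, κ x s ∂(π.map Prod.snd) :=
        (lintegral_map (κ.measurable_coe hs) measurable_snd).symm
      rw [e1, e2, hπ2']
      calc ∫⁻ x, κ x s ∂μJ.fst
          = (μJ.fst ⊗ₘ κ) (Prod.snd ⁻¹' s) := (Measure.compProd_apply (measurable_snd hs)).symm
        _ = μJ (Prod.snd ⁻¹' s) := by rw [μJ.disintegrate κ]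
        _ = P_Z s := by
            rw [hμJ, Measure.map_apply hgs (measurable_snd hs)]
            congr 1
    -- the conditional kernel is concentrated on the fibers of g
    have hSm : MeasurableSet {p : X × Z | g p.2 = p.1} :=
      measurableSet_eq_fun_sb (hg.comp measurable_snd) measurable_fst
    have hae : ∀ᵐ x ∂(μJ.fst), κ x {z | g z = x}ᶜ = 0 := by
      have h0 : μJ {p : X × Z | g p.2 = p.1}ᶜ = 0 := by
        rw [hμJ, Measure.map_apply hgs hSm.compl]
        convert measure_empty
        · ext z; simp
        · infer_instance
      rw [← μJ.disintegrate κ, Measure.compProd_apply hSm.compl] at h0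
      have hm : Measurable fun x : X => κ x (Prod.mk x ⁻¹' {p : X × Z | g p.2 = p.1}ᶜ) :=
        Kernel.measurable_kernel_prodMk_left hSm.compl
      filter_upwards [(lintegral_eq_zero_iff hm).mp h0] with x hx
      exact hx
    have haeπ : ∀ᵐ p ∂π, κ p.2 {z | g z = p.2}ᶜ = 0 := by
      rw [← hπ2'] at hae
      exact ae_of_ae_map measurable_snd.aemeasurable hae
    -- conclude
    refine iInf_le_of_le ρ (iInf_le_of_le inferInstance
      (iInf_le_of_le hρ1 (iInf_le_of_le hρ2 (le_of_eq ?_))))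
    have hcg : Measurable fun p : X × Z => c (p.1, g p.2) :=
      hc.comp (measurable_fst.prodMk (hg.comp measurable_snd))
    rw [hρdef, lintegral_map hcg hqm]
    show ∫⁻ q : (X × X) × Z, c (q.1.1, g q.2) ∂(π ⊗ₘ K) = ∫⁻ p, c p ∂π
    have hF : Measurable fun q : (X × X) × Z => c (q.1.1, g q.2) :=
      hc.comp ((measurable_fst.comp measurable_fst).prodMk (hg.comp measurable_snd))
    rw [Measure.lintegral_compProd hF]
    refine lintegral_congr_ae ?_
    filter_upwards [haeπ] with p hp
    have hz : ∀ᵐ z ∂(κ p.2), g z = p.2 := ae_iff.mpr hp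
    calc ∫⁻ z, c (p.1, g z) ∂(K p)
        = ∫⁻ z, c (p.1, g z) ∂(κ p.2) := by rw [hK, Kernel.comap_apply]
      _ = ∫⁻ _z, c (p.1, p.2) ∂(κ p.2) := by
          refine lintegral_congr_ae ?_
          filter_upwards [hz] with z hzz
          rw [hzz]
      _ = c p := by
          rw [lintegral_const, measure_univ, mul_one]
end

section
/- Let X be a standard Borel space with probability measure μ, fix an integer d ≥ 2 and τ > 0, and let f : X → S^{d-1} be measurable. Define, for each integer K ≥ 1, L_neg(f; τ, K) := ∫ log( (1/K) Σ_{j=1}^{K} exp(⟨f(x), f(x_j)⟩/τ) ) dμ^{K+1}(x, x_1, …, x_K), the expectation being over K+1 independent samples from μ. Then L_neg(f; τ, K) converges as K → ∞ to ∫_X log( ∫_X exp(⟨f(x), f(x')⟩/τ) dμ(x') ) dμ(x). -/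
/-!
Fix the anchor `x`. The inner expectation is `E log S_K`, where `S_K` is the empirical mean of
`K` i.i.d. copies of `exp (⟪f x, f x'⟫ / τ)`, a random variable with values in `[A, B]`,
`A = exp (-1/|τ|) > 0`, `B = exp (1/|τ|)`. The second-order bound
`|log t - log m - (t - m)/m| ≤ (t - m)²/A²` on `[A, ∞)`, integrated against the law of `S_K`
(whose mean is `m`), gives `|E log S_K - log m| ≤ Var S_K / A²`, and by independence and
Popoviciu's inequality `Var S_K = Var / K ≤ (B - A)² / (4 K)`.
The bound is uniform in `x`, so integrating over `x` yields convergence at rate `O(1/K)`.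
-/

open MeasureTheory Metric Filter ProbabilityTheory

theorem Real.abs_log_sub_log_sub_div_le {A s t : ℝ} (hA : 0 < A) (hs : A ≤ s) (ht : A ≤ t) :
    |Real.log t - Real.log s - (t - s) / s| ≤ (t - s) ^ 2 / A ^ 2 := by
  have hs0 : 0 < s := hA.trans_le hs
  have ht0 : 0 < t := hA.trans_le ht
  have upper : Real.log t - Real.log s ≤ (t - s) / s := by
    have := Real.log_le_sub_one_of_pos (div_pos ht0 hs0)
    rw [Real.log_div ht0.ne' hs0.ne'] at this
    rwa [sub_div, div_self hs0.ne']
  have lower : (t - s) / t ≤ Real.log t - Real.log s := by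
    have := Real.log_le_sub_one_of_pos (div_pos hs0 ht0)
    rw [Real.log_div hs0.ne' ht0.ne'] at this
    have h : s / t - 1 = -((t - s) / t) := by field_simp; ring
    linarith
  have gap : (t - s) / s - (t - s) / t ≤ (t - s) ^ 2 / A ^ 2 :=
    calc (t - s) / s - (t - s) / t = (t - s) ^ 2 / (s * t) := by field_simp
      _ ≤ (t - s) ^ 2 / A ^ 2 := by rw [sq A]; gcongr
  rw [abs_le]
  constructor <;> linarith [div_nonneg (sq_nonneg (t - s)) (sq_nonneg A)]

theorem Real.log_mem_Icc_log {A B t : ℝ} (hA : 0 < A) (ht : t ∈ Set.Icc A B) :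
    Real.log t ∈ Set.Icc (Real.log A) (Real.log B) :=
  ⟨Real.log_le_log hA ht.1, Real.log_le_log (hA.trans_le ht.1) ht.2⟩

theorem Fin.one_div_mul_sum_mem_Icc {K : ℕ} (hK : K ≠ 0) {a b : ℝ} {z : Fin K → ℝ}
    (hz : ∀ j, z j ∈ Set.Icc a b) : 1 / (K : ℝ) * ∑ j, z j ∈ Set.Icc a b := by
  rw [Finset.mul_sum]
  exact (convex_Icc a b).sum_mem (t := Finset.univ) (w := fun _ => 1 / (K : ℝ))
    (fun _ _ => by positivity) (by simp [hK]) fun j _ => hz j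

section ProbabilitySpace

variable {Ω : Type*} [MeasurableSpace Ω] {P : Measure Ω} [IsProbabilityMeasure P]
  {S : Ω → ℝ} {A B : ℝ}

theorem integral_mem_Icc_of_ae_mem_Icc (hS : AEMeasurable S P)
    (hSAB : ∀ᵐ ω ∂P, S ω ∈ Set.Icc A B) : ∫ ω, S ω ∂P ∈ Set.Icc A B := by
  have hint := Integrable.of_mem_Icc A B hS hSAB
  exact ⟨by simpa using integral_mono_ae (integrable_const A) hint (hSAB.mono fun _ h => h.1),
    by simpa using integral_mono_ae hint (integrable_const B) (hSAB.mono fun _ h => h.2)⟩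

theorem abs_integral_log_sub_log_integral_le (hA : 0 < A) (hS : AEMeasurable S P)
    (hSAB : ∀ᵐ ω ∂P, S ω ∈ Set.Icc A B) :
    |∫ ω, Real.log (S ω) ∂P - Real.log (∫ ω, S ω ∂P)| ≤ Var[S; P] / A ^ 2 := by
  set m := ∫ ω, S ω ∂P
  have hmA : A ≤ m := (integral_mem_Icc_of_ae_mem_Icc hS hSAB).1
  have hS2 : MemLp S 2 P := memLp_of_bounded hSAB hS.aestronglyMeasurable 2
  have hlogS : Integrable (fun ω => Real.log (S ω)) P :=
    .of_mem_Icc _ _ (Real.measurable_log.comp_aemeasurable hS)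
      (hSAB.mono fun _ => Real.log_mem_Icc_log hA)
  have hlin : Integrable (fun ω => (S ω - m) / m) P :=
    ((hS2.integrable one_le_two).sub (integrable_const m)).div_const m
  have hcentered : ∫ ω, (S ω - m) / m ∂P = 0 := by
    rw [integral_div, integral_sub (hS2.integrable one_le_two) (integrable_const m)]
    simp [m]
  calc |∫ ω, Real.log (S ω) ∂P - Real.log m|
      = ‖∫ ω, (Real.log (S ω) - Real.log m - (S ω - m) / m) ∂P‖ := by
        rw [integral_sub (f := fun ω => Real.log (S ω) - Real.log m)
          (hlogS.sub (integrable_const _)) hlin, hcentered,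
          integral_sub hlogS (integrable_const _), integral_const]
        simp
    _ ≤ ∫ ω, (S ω - m) ^ 2 / A ^ 2 ∂P :=
        norm_integral_le_of_norm_le ((hS2.sub (memLp_const m)).integrable_sq.div_const _)
          (hSAB.mono fun _ h => Real.abs_log_sub_log_sub_div_le hA hmA h.1)
    _ = Var[S; P] / A ^ 2 := by rw [integral_div, variance_eq_integral hS]

end ProbabilitySpace

section SampleMean

variable {X : Type*} [MeasurableSpace X] {μ : Measure X} [IsProbabilityMeasure μ]

theorem variance_sampleMean {q : X → ℝ} (hq : MemLp q 2 μ) (K : ℕ) :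
    Var[fun y : Fin K → X => 1 / (K : ℝ) * ∑ j, q (y j); Measure.pi fun _ => μ]
      = Var[q; μ] / K := by
  have hsum : (fun y : Fin K → X => ∑ j, q (y j)) = ∑ j : Fin K, fun y => q (y j) := by
    funext y; simp
  rw [variance_const_mul, hsum, variance_sum_pi fun _ => hq]
  obtain rfl | hK := eq_or_ne K 0
  · simp
  · simp [Finset.card_univ]
    field_simp

theorem integral_sampleMean {q : X → ℝ} (hq : Integrable q μ) {K : ℕ} (hK : K ≠ 0) :
    ∫ y : Fin K → X, 1 / (K : ℝ) * ∑ j, q (y j) ∂(Measure.pi fun _ => μ)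
      = ∫ x, q x ∂μ := by
  rw [integral_const_mul, integral_finsetSum]
  · simp [integral_comp_eval (μ := fun _ => μ) hq.1]
    field_simp
  · exact fun j _ => integrable_comp_eval (μ := fun _ => μ) hq

theorem abs_integral_log_sampleMean_sub_le {q : X → ℝ} (hq : Measurable q) {A B : ℝ}
    (hA : 0 < A) (hqAB : ∀ x, q x ∈ Set.Icc A B) {K : ℕ} (hK : K ≠ 0) :
    |∫ y : Fin K → X, Real.log (1 / (K : ℝ) * ∑ j, q (y j)) ∂(Measure.pi fun _ => μ)
      - Real.log (∫ x, q x ∂μ)| ≤ ((B - A) / 2) ^ 2 / A ^ 2 / K := by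
  have hqAB' : ∀ᵐ x ∂μ, q x ∈ Set.Icc A B := ae_of_all _ hqAB
  have hmean : Measurable fun y : Fin K → X => 1 / (K : ℝ) * ∑ j, q (y j) := by fun_prop
  calc _ ≤ Var[fun y : Fin K → X => 1 / (K : ℝ) * ∑ j, q (y j); Measure.pi fun _ => μ]
        / A ^ 2 := by
        rw [← integral_sampleMean (.of_mem_Icc A B hq.aemeasurable hqAB') hK]
        exact abs_integral_log_sub_log_integral_le hA hmean.aemeasurable
          (ae_of_all _ fun y => Fin.one_div_mul_sum_mem_Icc hK fun j => hqAB (y j))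
    _ = Var[q; μ] / K / A ^ 2 := by
        rw [variance_sampleMean (memLp_of_bounded hqAB' hq.aestronglyMeasurable 2)]
    _ ≤ ((B - A) / 2) ^ 2 / K / A ^ 2 := by
        gcongr
        exact variance_le_sq_of_bounded hqAB' hq.aemeasurable
    _ = ((B - A) / 2) ^ 2 / A ^ 2 / K := div_right_comm _ _ _

theorem abs_integral_log_prod_sampleMean_sub_le {g : X → X → ℝ}
    (hg : Measurable (Function.uncurry g)) {A B : ℝ} (hA : 0 < A)
    (hgAB : ∀ x y, g x y ∈ Set.Icc A B) {K : ℕ} (hK : K ≠ 0) :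
    |∫ p : X × (Fin K → X), Real.log (1 / (K : ℝ) * ∑ j, g p.1 (p.2 j))
        ∂(μ.prod (Measure.pi fun _ => μ)) - ∫ x, Real.log (∫ y, g x y ∂μ) ∂μ|
      ≤ ((B - A) / 2) ^ 2 / A ^ 2 / K := by
  have hgx : ∀ x, Measurable (g x) := fun x => hg.comp measurable_prodMk_left
  have hjoint : Integrable (fun p : X × (Fin K → X) =>
      Real.log (1 / (K : ℝ) * ∑ j, g p.1 (p.2 j))) (μ.prod (Measure.pi fun _ => μ)) :=
    .of_mem_Icc (Real.log A) (Real.log B) (by fun_prop) (ae_of_all _ fun p =>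
      Real.log_mem_Icc_log hA (Fin.one_div_mul_sum_mem_Icc hK fun j => hgAB p.1 (p.2 j)))
  have hmean : Measurable fun x => ∫ y, g x y ∂μ :=
    hg.stronglyMeasurable.integral_prod_right'.measurable
  have hlimit : Integrable (fun x => Real.log (∫ y, g x y ∂μ)) μ :=
    .of_mem_Icc (Real.log A) (Real.log B) (Real.measurable_log.comp hmean).aemeasurable
      (ae_of_all _ fun x => Real.log_mem_Icc_log hA
        (integral_mem_Icc_of_ae_mem_Icc (hgx x).aemeasurable (ae_of_all _ (hgAB x))))
  rw [integral_prod _ hjoint, ← integral_sub hjoint.integral_prod_left hlimit,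
    ← Real.norm_eq_abs]
  refine (norm_integral_le_of_norm_le_const (C := ((B - A) / 2) ^ 2 / A ^ 2 / K)
    (ae_of_all _ fun x => ?_)).trans_eq (by simp)
  exact abs_integral_log_sampleMean_sub_le (hgx x) hA (hgAB x) hK

theorem tendsto_integral_log_prod_sampleMean {g : X → X → ℝ}
    (hg : Measurable (Function.uncurry g)) {A B : ℝ} (hA : 0 < A)
    (hgAB : ∀ x y, g x y ∈ Set.Icc A B) :
    Tendsto (fun K : ℕ => ∫ p : X × (Fin K → X),
        Real.log (1 / (K : ℝ) * ∑ j, g p.1 (p.2 j)) ∂(μ.prod (Measure.pi fun _ => μ)))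
      atTop (nhds (∫ x, Real.log (∫ y, g x y ∂μ) ∂μ)) := by
  rw [tendsto_iff_norm_sub_tendsto_zero]
  refine squeeze_zero' (.of_forall fun _ => norm_nonneg _) ?_
    (tendsto_const_div_atTop_nhds_zero_nat (((B - A) / 2) ^ 2 / A ^ 2))
  filter_upwards [eventually_ne_atTop 0] with K hK
  exact abs_integral_log_prod_sampleMean_sub_le hg hA hgAB hK

end SampleMean

theorem Real.exp_inner_div_mem_Icc {E : Type*} [NormedAddCommGroup E] [InnerProductSpace ℝ E]
    {u v : E} (hu : u ∈ sphere 0 1) (hv : v ∈ sphere 0 1) (τ : ℝ) :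
    Real.exp (inner ℝ u v / τ) ∈ Set.Icc (Real.exp (-|τ|⁻¹)) (Real.exp |τ|⁻¹) := by
  have hinner : |inner ℝ u v| ≤ 1 := by
    simpa [mem_sphere_zero_iff_norm.1 hu, mem_sphere_zero_iff_norm.1 hv]
      using abs_real_inner_le_norm u v
  have h : |inner ℝ u v / τ| ≤ |τ|⁻¹ := by
    rw [abs_div, div_eq_mul_inv]
    exact mul_le_of_le_one_left (inv_nonneg.2 (abs_nonneg τ)) hinner
  exact ⟨Real.exp_le_exp.2 (neg_le_of_abs_le h), Real.exp_le_exp.2 (le_of_abs_le h)⟩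

theorem tendsto_contrastive_neg_loss_general
    {X : Type*} [MeasurableSpace X]
    (μ : Measure X) [IsProbabilityMeasure μ]
    {d : ℕ} {τ : ℝ}
    (f : X → sphere (0 : EuclideanSpace ℝ (Fin d)) 1) (hf : Measurable f) :
    Tendsto
      (fun K : ℕ =>
        ∫ p : X × (Fin K → X),
          Real.log ((1 / (K : ℝ)) * ∑ j : Fin K,
            Real.exp ((inner ℝ (f p.1 : EuclideanSpace ℝ (Fin d))
              (f (p.2 j) : EuclideanSpace ℝ (Fin d)) : ℝ) / τ))
          ∂(μ.prod (Measure.pi fun _ : Fin K => μ)))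
      atTop
      (nhds (∫ x, Real.log (∫ x',
        Real.exp ((inner ℝ (f x : EuclideanSpace ℝ (Fin d))
          (f x' : EuclideanSpace ℝ (Fin d)) : ℝ) / τ) ∂μ) ∂μ)) := by
  have hF : Measurable fun x => (f x : EuclideanSpace ℝ (Fin d)) := measurable_subtype_coe.comp hf
  exact tendsto_integral_log_prod_sampleMean
    (((hF.comp measurable_fst).inner (hF.comp measurable_snd)).div_const τ).exp
    (Real.exp_pos _) fun x y => Real.exp_inner_div_mem_Icc (f x).2 (f y).2 τ

/-- Convergence of the negative-sampling contrastive loss: for a measurable encoder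
`f : X → S^{d-1}` and i.i.d. samples `x, x₁, …, x_K ~ μ`, the quantity
`L_neg(f; τ, K) = E[log ((1/K) ∑_j exp (⟪f x, f x_j⟫ / τ))]` converges, as `K → ∞`,
to `∫ log (∫ exp (⟪f x, f x'⟫ / τ) dμ(x')) dμ(x)`. -/
theorem tendsto_contrastive_neg_loss
    {X : Type*} [MeasurableSpace X] [StandardBorelSpace X]
    (μ : Measure X) [IsProbabilityMeasure μ]
    {d : ℕ} (hd : 2 ≤ d) {τ : ℝ} (hτ : 0 < τ)
    (f : X → sphere (0 : EuclideanSpace ℝ (Fin d)) 1) (hf : Measurable f) :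
    Tendsto
      (fun K : ℕ =>
        ∫ p : X × (Fin K → X),
          Real.log ((1 / (K : ℝ)) * ∑ j : Fin K,
            Real.exp ((inner ℝ (f p.1 : EuclideanSpace ℝ (Fin d))
              (f (p.2 j) : EuclideanSpace ℝ (Fin d)) : ℝ) / τ))
          ∂(μ.prod (Measure.pi fun _ : Fin K => μ)))
      atTop
      (nhds (∫ x, Real.log (∫ x',
        Real.exp ((inner ℝ (f x : EuclideanSpace ℝ (Fin d))
          (f x' : EuclideanSpace ℝ (Fin d)) : ℝ) / τ) ∂μ) ∂μ)) :=
  tendsto_contrastive_neg_loss_general μ f hf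
end

section
/- Fix d ≥ 2 and τ > 0, and let σ be the uniform probability measure on S^{d-1}. For every Borel probability measure μ on S^{d-1}, the pairwise energy satisfies ∬ exp(⟨u, v⟩/τ) dμ(u) dμ(v) ≥ ∬ exp(⟨u, v⟩/τ) dσ(u) dσ(v), with equality if and only if μ = σ; i.e. σ is the unique minimizer of the energy functional μ ↦ ∬ exp(⟨u,v⟩/τ) dμ dμ over Borel probability measures on S^{d-1}. -/
/-!
Expanding the kernel in powers of `⟪u, v⟫ = ∑ᵢ uᵢ vᵢ` writes the energy
`E(μ, ν) = ∬ exp (⟪u, v⟫ / τ) dμ(u) dν(v)` as `∑ₖ (τᵏ k!)⁻¹ ∑_{|α| = k} m_α(μ) m_α(ν)`, where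
`m_α` are the moments of monomials. Hence
`E(μ, μ) - 2 E(μ, ν) + E(ν, ν) = ∑ₖ (τᵏ k!)⁻¹ ∑_α (m_α(μ) - m_α(ν))² ≥ 0`, with equality only when
all moments agree, which by Stone–Weierstrass forces `μ = ν`. Rotation invariance of `σ` makes
`u ↦ ∫ exp (⟪u, v⟫ / τ) dσ(v)` constant (a reflection carries any unit vector to any other), so
`E(μ, σ) = E(σ, σ)`, and the inequality becomes `E(σ, σ) ≤ E(μ, μ)`.
-/

open MeasureTheory Metric

noncomputable def sphereRot {d : ℕ}
    (T : EuclideanSpace ℝ (Fin d) ≃ₗᵢ[ℝ] EuclideanSpace ℝ (Fin d))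
    (u : sphere (0 : EuclideanSpace ℝ (Fin d)) 1) :
    sphere (0 : EuclideanSpace ℝ (Fin d)) 1 :=
  ⟨T u, by
    rw [mem_sphere_zero_iff_norm, T.norm_map, ← mem_sphere_zero_iff_norm]
    exact u.2⟩

open scoped RealInnerProductSpace

theorem Continuous.integrable_of_compactSpace {X E : Type*} [TopologicalSpace X] [CompactSpace X]
    [MeasurableSpace X] [OpensMeasurableSpace X] [NormedAddCommGroup E] {μ : Measure X}
    [IsFiniteMeasure μ] {f : X → E} (hf : Continuous f) : Integrable f μ :=
  hf.integrable_of_hasCompactSupport (.of_compactSpace f)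

section IntegralCLM

variable {X : Type*} [TopologicalSpace X] [CompactSpace X] [MeasurableSpace X] [BorelSpace X]
  [SecondCountableTopologyEither X ℝ] (μ : Measure X) [IsFiniteMeasure μ]

noncomputable def ContinuousMap.integralCLM : C(X, ℝ) →L[ℝ] ℝ :=
  L1.integralCLM ∘L ContinuousMap.toLp 1 μ ℝ

lemma ContinuousMap.integralCLM_apply (f : C(X, ℝ)) : integralCLM μ f = ∫ x, f x ∂μ := by
  rw [ContinuousMap.integralCLM, ContinuousLinearMap.comp_apply, ← L1.integral_eq,
    L1.integral_eq_integral]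
  exact integral_congr_ae (ContinuousMap.coeFn_toLp μ f)

end IntegralCLM

lemma hasSum_integral_pow_div_factorial {X : Type*} [MeasurableSpace X] {P : Measure X}
    [IsFiniteMeasure P] {f : X → ℝ} {C : ℝ} (hf : AEStronglyMeasurable f P)
    (hC : ∀ᵐ x ∂P, |f x| ≤ C) :
    HasSum (fun k : ℕ => ∫ x, f x ^ k / k.factorial ∂P) (∫ x, Real.exp (f x) ∂P) := by
  have hbound : ∀ k : ℕ, ∀ᵐ x ∂P, ‖f x ^ k / k.factorial‖ ≤ C ^ k / k.factorial := by
    refine fun k => hC.mono fun x hx => ?_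
    rw [norm_div, norm_pow, Real.norm_eq_abs, RCLike.norm_natCast]
    gcongr
  have hint : ∀ k : ℕ, Integrable (fun x => f x ^ k / k.factorial) P := fun k =>
    .of_bound (by fun_prop) _ (hbound k)
  have hsum : Summable fun k : ℕ => ∫ x, ‖f x ^ k / k.factorial‖ ∂P := by
    refine .of_nonneg_of_le (fun k => integral_nonneg fun _ => norm_nonneg _) (fun k => ?_)
      ((Real.summable_pow_div_factorial C).mul_left (P.real Set.univ))
    calc ∫ x, ‖f x ^ k / k.factorial‖ ∂P ≤ ∫ _, C ^ k / k.factorial ∂P :=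
          integral_mono_ae (hint k).norm (integrable_const _) (hbound k)
      _ = P.real Set.univ * (C ^ k / k.factorial) := by rw [integral_const, smul_eq_mul]
  simpa only [Real.exp_eq_exp_ℝ, NormedSpace.exp_eq_tsum_div] using
    hasSum_integral_of_summable_integral_norm hint hsum

namespace SphereEnergy

variable {d : ℕ}

local notation "𝕊" d:max => sphere (0 : EuclideanSpace ℝ (Fin d)) 1

/-- Monomials are indexed by words `α : Fin k → Fin d` rather than by exponent vectors, so that
`⟪x, y⟫ ^ k` expands without multinomial coefficients. -/
def monomial {k : ℕ} (α : Fin k → Fin d) (x : EuclideanSpace ℝ (Fin d)) : ℝ :=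
  ∏ j, x (α j)

@[fun_prop]
lemma continuous_monomial {k : ℕ} (α : Fin k → Fin d) : Continuous (monomial α) :=
  continuous_finsetProd _ fun j _ => (EuclideanSpace.proj (α j)).continuous

lemma monomial_append {k l : ℕ} (α : Fin k → Fin d) (β : Fin l → Fin d)
    (x : EuclideanSpace ℝ (Fin d)) :
    monomial (Fin.append α β) x = monomial α x * monomial β x := by
  simp only [monomial, Fin.prod_univ_add, Fin.append_left, Fin.append_right]

lemma inner_pow_eq_sum_monomial (x y : EuclideanSpace ℝ (Fin d)) (k : ℕ) :
    ⟪x, y⟫ ^ k = ∑ α : Fin k → Fin d, monomial α x * monomial α y := by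
  simp only [PiLp.inner_apply, RCLike.inner_apply, conj_trivial, Fintype.sum_pow, monomial,
    ← Finset.prod_mul_distrib, mul_comm]

section Ext

variable {s : Set (EuclideanSpace ℝ (Fin d))}

@[simps]
def monomialOn (s : Set (EuclideanSpace ℝ (Fin d))) {k : ℕ} (α : Fin k → Fin d) : C(s, ℝ) :=
  ⟨fun x => monomial α x, by fun_prop⟩

lemma closure_range_coord_subset_range_monomialOn :
    (Submonoid.closure (Set.range fun i : Fin d => monomialOn s fun _ : Fin 1 => i) : Set C(s, ℝ))
      ⊆ Set.range fun a : Σ k, Fin k → Fin d => monomialOn s a.2 := by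
  intro f hf
  induction hf using Submonoid.closure_induction with
  | mem f hf =>
    obtain ⟨i, rfl⟩ := hf
    exact ⟨⟨1, fun _ => i⟩, rfl⟩
  | one => exact ⟨⟨0, Fin.elim0⟩, by ext; simp [monomialOn, monomial]⟩
  | mul f g _ _ hf hg =>
    obtain ⟨⟨k, α⟩, rfl⟩ := hf
    obtain ⟨⟨l, β⟩, rfl⟩ := hg
    exact ⟨⟨k + l, Fin.append α β⟩, by ext; simp [monomialOn, monomial_append]⟩

lemma dense_span_monomialOn [CompactSpace s] :
    Dense (Submodule.span ℝ (Set.range fun a : Σ k, Fin k → Fin d => monomialOn s a.2) :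
      Set C(s, ℝ)) := by
  set A := Algebra.adjoin ℝ (Set.range fun i : Fin d => monomialOn s fun _ : Fin 1 => i)
  have hsep : A.SeparatesPoints := by
    rintro x y hxy
    obtain ⟨i, hi⟩ : ∃ i, (x : EuclideanSpace ℝ (Fin d)) i ≠ (y : EuclideanSpace ℝ (Fin d)) i := by
      by_contra! h
      exact hxy (Subtype.ext (PiLp.ext h))
    exact ⟨_, ⟨_, Algebra.subset_adjoin ⟨i, rfl⟩, rfl⟩, by simpa [monomialOn, monomial] using hi⟩
  have hA : Dense (A : Set C(s, ℝ)) := by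
    rw [dense_iff_closure_eq, ← A.topologicalClosure_coe,
      ContinuousMap.subalgebra_topologicalClosure_eq_top_of_separatesPoints A hsep]
    rfl
  refine hA.mono ?_
  change (Subalgebra.toSubmodule A : Set C(s, ℝ)) ⊆ _
  rw [Algebra.adjoin_eq_span]
  exact Submodule.span_mono closure_range_coord_subset_range_monomialOn

lemma ext_of_integral_monomial_eq [CompactSpace s] {μ ν : Measure s} [IsFiniteMeasure μ]
    [IsFiniteMeasure ν]
    (h : ∀ k (α : Fin k → Fin d), ∫ x, monomial α x ∂μ = ∫ x, monomial α x ∂ν) : μ = ν := by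
  have hCLM : ContinuousMap.integralCLM μ = ContinuousMap.integralCLM ν := by
    refine ContinuousLinearMap.ext_on dense_span_monomialOn ?_
    rintro _ ⟨⟨k, α⟩, rfl⟩
    simpa only [ContinuousMap.integralCLM_apply, monomialOn_apply] using h k α
  refine ext_of_forall_integral_eq_of_IsFiniteMeasure fun f => ?_
  simpa only [ContinuousMap.integralCLM_apply, BoundedContinuousFunction.coe_toContinuousMap]
    using congr($hCLM f.toContinuousMap)

end Ext

lemma integral_prod_inner_pow {s : Set (EuclideanSpace ℝ (Fin d))} [CompactSpace s]
    (μ ν : Measure s) [IsFiniteMeasure μ] [IsFiniteMeasure ν] (k : ℕ) :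
    ∫ z, ⟪z.1.1, z.2.1⟫ ^ k ∂(μ.prod ν)
      = ∑ α : Fin k → Fin d, (∫ x, monomial α x ∂μ) * ∫ y, monomial α y ∂ν := by
  simp_rw [inner_pow_eq_sum_monomial]
  rw [integral_finsetSum _ fun α _ => Continuous.integrable_of_compactSpace (by fun_prop)]
  exact Finset.sum_congr rfl fun α _ =>
    integral_prod_mul (fun x : s => monomial α x) (fun y : s => monomial α y)

noncomputable def energy (τ : ℝ) (μ ν : Measure (𝕊 d)) : ℝ :=
  ∫ u, ∫ v, Real.exp (⟪u.1, v.1⟫ / τ) ∂ν ∂μ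

lemma hasSum_energy (τ : ℝ) (μ ν : Measure (𝕊 d)) [IsFiniteMeasure μ] [IsFiniteMeasure ν] :
    HasSum (fun k : ℕ => (τ ^ k * k.factorial)⁻¹ *
        ∑ α : Fin k → Fin d, (∫ u, monomial α u ∂μ) * ∫ v, monomial α v ∂ν)
      (energy τ μ ν) := by
  have hcont : Continuous fun z : 𝕊 d × 𝕊 d => ⟪z.1.1, z.2.1⟫ / τ := by fun_prop
  have hbound : ∀ z : 𝕊 d × 𝕊 d, |⟪z.1.1, z.2.1⟫ / τ| ≤ |τ|⁻¹ := by
    intro z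
    rw [abs_div, div_eq_mul_inv]
    refine mul_le_of_le_one_left (by positivity) ((abs_real_inner_le_norm _ _).trans ?_)
    simp [norm_eq_of_mem_sphere]
  have hint : Integrable (fun z : 𝕊 d × 𝕊 d => Real.exp (⟪z.1.1, z.2.1⟫ / τ)) (μ.prod ν) :=
    (Real.continuous_exp.comp hcont).integrable_of_compactSpace
  rw [energy, ← integral_prod _ hint]
  convert hasSum_integral_pow_div_factorial (P := μ.prod ν) hcont.aestronglyMeasurable
    (ae_of_all _ hbound) using 2 with k
  rw [← integral_prod_inner_pow, ← integral_const_mul]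
  congr 1 with z
  ring

lemma hasSum_energy_sub (τ : ℝ) (μ ν : Measure (𝕊 d)) [IsFiniteMeasure μ] [IsFiniteMeasure ν] :
    HasSum (fun k : ℕ => (τ ^ k * k.factorial)⁻¹ *
        ∑ α : Fin k → Fin d, ((∫ u, monomial α u ∂μ) - ∫ v, monomial α v ∂ν) ^ 2)
      (energy τ μ μ - 2 * energy τ μ ν + energy τ ν ν) := by
  refine (((hasSum_energy τ μ μ).sub ((hasSum_energy τ μ ν).mul_left 2)).add
    (hasSum_energy τ ν ν)).congr_fun fun k => ?_
  simp only [Finset.mul_sum, ← Finset.sum_sub_distrib, ← Finset.sum_add_distrib]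
  exact Finset.sum_congr rfl fun _ _ => by ring

lemma two_mul_energy_le {τ : ℝ} (hτ : 0 ≤ τ) (μ ν : Measure (𝕊 d)) [IsFiniteMeasure μ]
    [IsFiniteMeasure ν] : 2 * energy τ μ ν ≤ energy τ μ μ + energy τ ν ν := by
  have := (hasSum_energy_sub τ μ ν).nonneg fun k => by positivity
  linarith

lemma two_mul_energy_eq_iff {τ : ℝ} (hτ : 0 < τ) (μ ν : Measure (𝕊 d)) [IsFiniteMeasure μ]
    [IsFiniteMeasure ν] : 2 * energy τ μ ν = energy τ μ μ + energy τ ν ν ↔ μ = ν := by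
  refine ⟨fun h => ext_of_integral_monomial_eq fun k α => ?_, by rintro rfl; ring⟩
  have hsum := hasSum_energy_sub τ μ ν
  rw [show energy τ μ μ - 2 * energy τ μ ν + energy τ ν ν = 0 by linarith,
    hasSum_zero_iff_of_nonneg fun k => by positivity] at hsum
  have hk := congrFun hsum k
  rw [Pi.zero_apply, mul_eq_zero, or_iff_right (by positivity),
    Finset.sum_eq_zero_iff_of_nonneg fun _ _ => sq_nonneg _] at hk
  exact sub_eq_zero.mp (pow_eq_zero_iff two_ne_zero |>.mp (hk α (Finset.mem_univ α)))

def IsRotationInvariant (σ : Measure (𝕊 d)) : Prop :=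
  ∀ T : EuclideanSpace ℝ (Fin d) ≃ₗᵢ[ℝ] EuclideanSpace ℝ (Fin d), σ.map (sphereRot T) = σ

lemma measurableEmbedding_sphereRot
    (T : EuclideanSpace ℝ (Fin d) ≃ₗᵢ[ℝ] EuclideanSpace ℝ (Fin d)) :
    MeasurableEmbedding (sphereRot T) :=
  (Continuous.isClosedEmbedding ((T.continuous.comp continuous_subtype_val).subtype_mk _)
    fun _ _ h => Subtype.ext (T.injective (congrArg Subtype.val h))).measurableEmbedding

lemma IsRotationInvariant.integral_comp_sphereRot {σ : Measure (𝕊 d)}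
    (hσ : IsRotationInvariant σ)
    (T : EuclideanSpace ℝ (Fin d) ≃ₗᵢ[ℝ] EuclideanSpace ℝ (Fin d)) (g : 𝕊 d → ℝ) :
    ∫ v, g (sphereRot T v) ∂σ = ∫ v, g v ∂σ := by
  rw [← (measurableEmbedding_sphereRot T).integral_map, hσ T]

lemma IsRotationInvariant.integral_comp_inner_eq {σ : Measure (𝕊 d)}
    (hσ : IsRotationInvariant σ) (f : ℝ → ℝ) (u u' : 𝕊 d) :
    ∫ v, f ⟪u.1, v.1⟫ ∂σ = ∫ v, f ⟪u'.1, v.1⟫ ∂σ := by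
  set T := Submodule.reflection (ℝ ∙ (u.1 - u'.1))ᗮ
  have hT : T u = u' := Submodule.reflection_sub (by simp [norm_eq_of_mem_sphere])
  rw [← hσ.integral_comp_sphereRot T fun v => f ⟪u'.1, v.1⟫]
  simp only [sphereRot, ← hT, T.inner_map_map]

lemma IsRotationInvariant.energy_eq_integral {σ : Measure (𝕊 d)} [IsProbabilityMeasure σ]
    (hσ : IsRotationInvariant σ) (τ : ℝ) (μ : Measure (𝕊 d)) [IsProbabilityMeasure μ] (u₀ : 𝕊 d) :
    energy τ μ σ = ∫ v, Real.exp (⟪u₀.1, v.1⟫ / τ) ∂σ := by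
  simp only [energy, hσ.integral_comp_inner_eq (fun t => Real.exp (t / τ)) _ u₀, integral_const,
    probReal_univ, one_smul]

lemma IsRotationInvariant.energy_eq {σ : Measure (𝕊 d)} [IsProbabilityMeasure σ]
    (hσ : IsRotationInvariant σ) (τ : ℝ) (μ : Measure (𝕊 d)) [IsProbabilityMeasure μ] :
    energy τ μ σ = energy τ σ σ := by
  obtain ⟨u₀⟩ := nonempty_of_isProbabilityMeasure σ
  rw [hσ.energy_eq_integral τ μ u₀, hσ.energy_eq_integral τ σ u₀]

end SphereEnergy

open SphereEnergy

theorem uniform_minimizes_energy_general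
    {d : ℕ} {τ : ℝ} (hτ : 0 < τ)
    (σ : Measure (sphere (0 : EuclideanSpace ℝ (Fin d)) 1)) [IsProbabilityMeasure σ]
    (hσ : ∀ T : EuclideanSpace ℝ (Fin d) ≃ₗᵢ[ℝ] EuclideanSpace ℝ (Fin d),
      σ.map (sphereRot T) = σ)
    (μ : Measure (sphere (0 : EuclideanSpace ℝ (Fin d)) 1)) [IsProbabilityMeasure μ] :
    (∫ u, ∫ v, Real.exp ((inner ℝ (u : EuclideanSpace ℝ (Fin d))
        (v : EuclideanSpace ℝ (Fin d)) : ℝ) / τ) ∂σ ∂σ)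
      ≤ ∫ u, ∫ v, Real.exp ((inner ℝ (u : EuclideanSpace ℝ (Fin d))
        (v : EuclideanSpace ℝ (Fin d)) : ℝ) / τ) ∂μ ∂μ
    ∧
    ((∫ u, ∫ v, Real.exp ((inner ℝ (u : EuclideanSpace ℝ (Fin d))
        (v : EuclideanSpace ℝ (Fin d)) : ℝ) / τ) ∂μ ∂μ)
      = (∫ u, ∫ v, Real.exp ((inner ℝ (u : EuclideanSpace ℝ (Fin d))
        (v : EuclideanSpace ℝ (Fin d)) : ℝ) / τ) ∂σ ∂σ) ↔ μ = σ) := by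
  change energy τ σ σ ≤ energy τ μ μ ∧ (energy τ μ μ = energy τ σ σ ↔ μ = σ)
  have hcross : energy τ μ σ = energy τ σ σ := IsRotationInvariant.energy_eq hσ τ μ
  have hle := two_mul_energy_le hτ.le μ σ
  rw [← two_mul_energy_eq_iff hτ μ σ, hcross]
  constructor
  · linarith
  · constructor <;> intro h <;> linarith

/-- The uniform probability measure `σ` on `S^{d-1}` (characterized as the unique
rotation-invariant Borel probability measure on the sphere) is the unique minimizer of
the pairwise energy `μ ↦ ∬ exp (⟪u,v⟫/τ) dμ dμ` over Borel probability measures on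
`S^{d-1}`. -/
theorem uniform_minimizes_energy
    {d : ℕ} (hd : 2 ≤ d) {τ : ℝ} (hτ : 0 < τ)
    (σ : Measure (sphere (0 : EuclideanSpace ℝ (Fin d)) 1)) [IsProbabilityMeasure σ]
    (hσ : ∀ T : EuclideanSpace ℝ (Fin d) ≃ₗᵢ[ℝ] EuclideanSpace ℝ (Fin d),
      σ.map (sphereRot T) = σ)
    (μ : Measure (sphere (0 : EuclideanSpace ℝ (Fin d)) 1)) [IsProbabilityMeasure μ] :
    (∫ u, ∫ v, Real.exp ((inner ℝ (u : EuclideanSpace ℝ (Fin d))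
        (v : EuclideanSpace ℝ (Fin d)) : ℝ) / τ) ∂σ ∂σ)
      ≤ ∫ u, ∫ v, Real.exp ((inner ℝ (u : EuclideanSpace ℝ (Fin d))
        (v : EuclideanSpace ℝ (Fin d)) : ℝ) / τ) ∂μ ∂μ
    ∧
    ((∫ u, ∫ v, Real.exp ((inner ℝ (u : EuclideanSpace ℝ (Fin d))
        (v : EuclideanSpace ℝ (Fin d)) : ℝ) / τ) ∂μ ∂μ)
      = (∫ u, ∫ v, Real.exp ((inner ℝ (u : EuclideanSpace ℝ (Fin d))
        (v : EuclideanSpace ℝ (Fin d)) : ℝ) / τ) ∂σ ∂σ) ↔ μ = σ) :=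
  uniform_minimizes_energy_general hτ σ hσ μ
end
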